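/- Let u ∈ Ω and let T(u) be the state obtained from u by one time evolution of the generalized box-ball system. Then the two semistandard tableaux ∅ ← f(u) and ∅ ← f(T(u)) coincide; that is, the P-symbol of the RSK correspondence is a conserved quantity of the generalized box-ball system. -/

import Mathlib

/-- Row bumping: `rowBump x r` inserts `x` into the row `r`, replacing the leftmost entry
strictly greater than `x` (which is returned as the bumped letter), or appending `x` at
the end if no such entry exists. -/
def rowBump {α : Type*} [LinearOrder α] (x : α) : List α → List α × Option α
  | [] => ([x], none)
  | a :: r =>
    if x < a then (x :: r, some a)
    else
      let p := rowBump x r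
      (a :: p.1, p.2)

/-- Schensted insertion of a letter into a tableau (a list of rows, top row first). -/
def tabInsert {α : Type*} [LinearOrder α] : List (List α) → α → List (List α)
  | [], x => [[x]]
  | r :: rs, x =>
    match rowBump x r with
    | (r', none) => r' :: rs
    | (r', some b) => r' :: tabInsert rs b

/-- `PSymbol w = ∅ ← w`: successive Schensted insertion of the letters of `w` into the
empty tableau. -/
def PSymbol {α : Type*} [LinearOrder α] (w : List α) : List (List α) :=
  w.foldl tabInsert []

/- States of the generalized box-ball system (`u : ℕ → Option (Fin m)`): `u p = some c`
means a ball of color `c` occupies box `p`, and `u p = none` means box `p` is empty. -/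

open Classical in
/-- Move the ball in box `p` to the nearest empty box on its right. -/
noncomputable def moveBall {m : ℕ} (u : ℕ → Option (Fin m)) (p : ℕ) :
    ℕ → Option (Fin m) :=
  if h : ∃ q, p < q ∧ u q = none then
    Function.update (Function.update u p none) (Nat.find h) (u p)
  else u

open Classical in
/-- The (finitely many) positions of the balls of color `c`, in increasing order. -/
noncomputable def colorPositions {m : ℕ} (u : ℕ → Option (Fin m)) (c : Fin m) : List ℕ :=
  if h : {p | u p = some c}.Finite then h.toFinset.sort (· ≤ ·) else []

/-- Move every ball of color `c` once, starting from the leftmost one. -/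
noncomputable def moveColor {m : ℕ} (u : ℕ → Option (Fin m)) (c : Fin m) :
    ℕ → Option (Fin m) :=
  (colorPositions u c).foldl moveBall u

/-- One time evolution step of the generalized box-ball system: for `i = 1, 2, …, m` in
increasing order, move every ball of color `i` once to the nearest empty box on its right,
the leftmost ball first. -/
noncomputable def bbsT {m : ℕ} (u : ℕ → Option (Fin m)) : ℕ → Option (Fin m) :=
  (List.finRange m).foldl moveColor u

open Classical in
/-- `extract u = f(u)`: the finite word over `[m]` obtained by deleting all empty boxes. -/
noncomputable def extract {m : ℕ} (u : ℕ → Option (Fin m)) : List (Fin m) :=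
  if h : ∃ N, ∀ i, N ≤ i → u i = none then
    (List.range (Nat.find h)).filterMap u
  else []

namespace BBS
variable {α : Type*} [LinearOrder α]

/-! ### Basic rowBump lemmas -/

@[simp] lemma rowBump_nil (x : α) : rowBump x ([] : List α) = ([x], none) := rfl

lemma rowBump_cons_lt {x a : α} (r : List α) (h : x < a) :
    rowBump x (a :: r) = (x :: r, some a) := by simp [rowBump, h]

lemma rowBump_cons_le {x a : α} (r : List α) (h : a ≤ x) :
    rowBump x (a :: r) = (a :: (rowBump x r).1, (rowBump x r).2) := by
  simp [rowBump, not_lt.2 h]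

lemma rowBump_fst_mem {x : α} : ∀ {R : List α} {b : α}, b ∈ (rowBump x R).1 → b = x ∨ b ∈ R
  | [], b, h => by simpa [rowBump] using h
  | a :: r, b, h => by
    rcases lt_or_ge x a with hx | hx
    · rw [rowBump_cons_lt r hx] at h
      rcases List.mem_cons.1 h with h | h
      · exact Or.inl h
      · exact Or.inr (List.mem_cons_of_mem _ h)
    · rw [rowBump_cons_le r hx] at h
      rcases List.mem_cons.1 h with h | h
      · exact Or.inr (by simp [h])
      · rcases rowBump_fst_mem h with h | h
        · exact Or.inl h
        · exact Or.inr (List.mem_cons_of_mem _ h)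

lemma rowBump_self_mem (x : α) : ∀ (R : List α), x ∈ (rowBump x R).1
  | [] => by simp
  | a :: r => by
    rcases lt_or_ge x a with hx | hx
    · rw [rowBump_cons_lt r hx]; simp
    · rw [rowBump_cons_le r hx]
      exact List.mem_cons_of_mem _ (rowBump_self_mem x r)

lemma rowBump_snd_mem {x : α} : ∀ {R : List α} {b : α}, (rowBump x R).2 = some b → b ∈ R
  | [], b, h => by simp at h
  | a :: r, b, h => by
    rcases lt_or_ge x a with hx | hx
    · rw [rowBump_cons_lt r hx] at h
      simp at h; simp [h]
    · rw [rowBump_cons_le r hx] at h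
      exact List.mem_cons_of_mem _ (rowBump_snd_mem h)

lemma rowBump_lt_snd {x : α} : ∀ {R : List α} {b : α}, (rowBump x R).2 = some b → x < b
  | [], b, h => by simp at h
  | a :: r, b, h => by
    rcases lt_or_ge x a with hx | hx
    · rw [rowBump_cons_lt r hx] at h
      simp at h; subst h; exact hx
    · rw [rowBump_cons_le r hx] at h
      exact rowBump_lt_snd h

lemma rowBump_snd_min {x : α} : ∀ {R : List α}, R.Pairwise (· ≤ ·) → ∀ {e : α}, e ∈ R → x < e →
    ∃ b, (rowBump x R).2 = some b ∧ b ≤ e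
  | [], _, e, he, _ => by simp at he
  | a :: r, hs, e, he, hxe => by
    rcases lt_or_ge x a with hx | hx
    · refine ⟨a, by rw [rowBump_cons_lt r hx], ?_⟩
      rcases List.mem_cons.1 he with h | h
      · exact le_of_eq h.symm
      · exact (List.pairwise_cons.1 hs).1 _ h
    · rw [rowBump_cons_le r hx]
      have her : e ∈ r := by
        rcases List.mem_cons.1 he with h | h
        · exact absurd (h ▸ hxe) (not_lt.2 hx)
        · exact h
      exact rowBump_snd_min (List.pairwise_cons.1 hs).2 her hxe

lemma rowBump_of_forall_le {x : α} : ∀ {R : List α}, (∀ e ∈ R, e ≤ x) →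
    rowBump x R = (R ++ [x], none)
  | [], _ => by simp
  | a :: r, h => by
    rw [rowBump_cons_le r (h a (by simp))]
    rw [rowBump_of_forall_le (fun e he => h e (List.mem_cons_of_mem _ he))]
    simp

lemma rowBump_snd_none_le {x : α} : ∀ {R : List α}, (rowBump x R).2 = none → ∀ e ∈ R, e ≤ x
  | [], _, e, he => by simp at he
  | a :: r, h, e, he => by
    rcases lt_or_ge x a with hx | hx
    · rw [rowBump_cons_lt r hx] at h; simp at h
    · rw [rowBump_cons_le r hx] at h
      rcases List.mem_cons.1 he with h' | h'
      · exact h' ▸ hx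
      · exact rowBump_snd_none_le h e h'

lemma rowBump_sorted {x : α} : ∀ {R : List α}, R.Pairwise (· ≤ ·) →
    (rowBump x R).1.Pairwise (· ≤ ·)
  | [], _ => by simp
  | a :: r, hs => by
    rcases List.pairwise_cons.1 hs with ⟨ha, hr⟩
    rcases lt_or_ge x a with hx | hx
    · rw [rowBump_cons_lt r hx]
      exact List.pairwise_cons.2 ⟨fun b hb => le_trans hx.le (ha b hb), hr⟩
    · rw [rowBump_cons_le r hx]
      refine List.pairwise_cons.2 ⟨fun b hb => ?_, rowBump_sorted hr⟩
      rcases rowBump_fst_mem hb with h | h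
      · exact h ▸ hx
      · exact ha b h

lemma rowBump_length {x : α} : ∀ (R : List α), (rowBump x R).1.length ≤ R.length + 1
  | [] => by simp
  | a :: r => by
    rcases lt_or_ge x a with hx | hx
    · rw [rowBump_cons_lt r hx]; simp
    · rw [rowBump_cons_le r hx]
      simpa using Nat.succ_le_succ (rowBump_length r)

/-! ### rowFold : inserting a word into a row, collecting bumped letters -/

def rowFold : List α → List α → List α × List α
  | R, [] => (R, [])
  | R, w :: W =>
    let p := rowBump w R
    let q := rowFold p.1 W
    (q.1, p.2.toList ++ q.2)

@[simp] lemma rowFold_nil (R : List α) : rowFold R [] = (R, []) := rfl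

lemma rowFold_cons (R : List α) (w : α) (W : List α) :
    rowFold R (w :: W) =
      ((rowFold (rowBump w R).1 W).1, (rowBump w R).2.toList ++ (rowFold (rowBump w R).1 W).2) :=
  rfl

def insWord (T : List (List α)) (W : List α) : List (List α) := W.foldl tabInsert T

@[simp] lemma insWord_nil (T : List (List α)) : insWord T [] = T := rfl

@[simp] lemma insWord_cons (T : List (List α)) (w : α) (W : List α) :
    insWord T (w :: W) = insWord (tabInsert T w) W := rfl

lemma insWord_append (T : List (List α)) (W₁ W₂ : List α) :
    insWord T (W₁ ++ W₂) = insWord (insWord T W₁) W₂ := List.foldl_append ..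

lemma tabInsert_cons_none {x : α} {R R' : List α} (Rs : List (List α))
    (h : rowBump x R = (R', none)) : tabInsert (R :: Rs) x = R' :: Rs := by
  simp [tabInsert, h]

lemma tabInsert_cons_some {x b : α} {R R' : List α} (Rs : List (List α))
    (h : rowBump x R = (R', some b)) : tabInsert (R :: Rs) x = R' :: tabInsert Rs b := by
  simp [tabInsert, h]

/-- decomposition of insertion of a word into a nonempty tableau -/
lemma insWord_cons_row (R : List α) (Rs : List (List α)) (W : List α) :
    insWord (R :: Rs) W = (rowFold R W).1 :: insWord Rs (rowFold R W).2 := by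
  induction W generalizing R Rs with
  | nil => simp
  | cons w W ih =>
    rw [insWord_cons, rowFold_cons]
    rcases hb : (rowBump w R).2 with _ | b
    · rw [tabInsert_cons_none Rs (by rw [← hb])]
      simpa using ih (rowBump w R).1 Rs
    · rw [tabInsert_cons_some Rs (by rw [← hb])]
      rw [ih (rowBump w R).1 (tabInsert Rs b)]
      simp


/-! ### Knuth-type relations and the row transfer lemma -/

def KRel3 (W1 W2 : List α) : Prop :=
  (∃ x y z : α, x ≤ y ∧ y < z ∧ W1 = [x, z, y] ∧ W2 = [z, x, y]) ∨
    (∃ x y z : α, x < y ∧ y ≤ z ∧ W1 = [y, z, x] ∧ W2 = [y, x, z])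

lemma rowFold_pass {a : α} : ∀ (W R : List α), (∀ w ∈ W, a ≤ w) →
    rowFold (a :: R) W = (a :: (rowFold R W).1, (rowFold R W).2)
  | [], R, _ => by simp
  | w :: W, R, h => by
    rw [rowFold_cons, rowBump_cons_le R (h w (by simp))]
    rw [rowFold_pass W (rowBump w R).1 (fun v hv => h v (by simp [hv]))]
    rw [rowFold_cons]

lemma rowFold_three (R : List α) (a b c : α) :
    rowFold R [a, b, c] =
      ((rowBump c (rowBump b (rowBump a R).1).1).1,
        (rowBump a R).2.toList ++ (rowBump b (rowBump a R).1).2.toList ++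
          (rowBump c (rowBump b (rowBump a R).1).1).2.toList) := by
  simp [rowFold_cons]

lemma RTL3a : ∀ {R : List α}, R.Pairwise (· ≤ ·) → ∀ {x y z : α}, x ≤ y → y < z →
    (rowFold R [x, z, y]).1 = (rowFold R [z, x, y]).1 ∧
      ((rowFold R [x, z, y]).2 = (rowFold R [z, x, y]).2 ∨
        KRel3 (rowFold R [x, z, y]).2 (rowFold R [z, x, y]).2) := by
  intro R
  induction R with
  | nil =>
    intro _ x y z hxy hyz
    have hxz : x < z := lt_of_le_of_lt hxy hyz
    have e1 : rowBump x ([] : List α) = ([x], none) := rowBump_nil x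
    have e2 : rowBump z [x] = ([x, z], none) := by
      rw [rowBump_cons_le [] hxz.le, rowBump_nil]
    have e3 : rowBump y [x, z] = ([x, y], some z) := by
      rw [rowBump_cons_le [z] hxy, rowBump_cons_lt [] hyz]
    have e4 : rowBump z ([] : List α) = ([z], none) := rowBump_nil z
    have e5 : rowBump x [z] = ([x], some z) := rowBump_cons_lt [] hxz
    have e6 : rowBump y [x] = ([x, y], none) := by
      rw [rowBump_cons_le [] hxy, rowBump_nil]
    rw [rowFold_three, rowFold_three]
    simp only [e1, e2, e3, e4, e5, e6, Option.toList_some, Option.toList_none,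
      List.nil_append, List.append_nil, List.cons_append, List.singleton_append]
    exact ⟨trivial, Or.inl trivial⟩
  | cons r R' ih =>
    intro hs x y z hxy hyz
    obtain ⟨hr, hs'⟩ := List.pairwise_cons.1 hs
    have hxz : x < z := lt_of_le_of_lt hxy hyz
    rcases le_or_gt r x with hrx | hxr
    · -- r ≤ x : everything passes over the head
      have hall1 : ∀ w ∈ [x, z, y], r ≤ w := by
        intro w hw
        simp only [List.mem_cons, List.not_mem_nil, or_false] at hw
        rcases hw with rfl | rfl | rfl
        exacts [hrx, le_trans hrx hxz.le, le_trans hrx hxy]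
      have hall2 : ∀ w ∈ [z, x, y], r ≤ w := by
        intro w hw
        simp only [List.mem_cons, List.not_mem_nil, or_false] at hw
        rcases hw with rfl | rfl | rfl
        exacts [le_trans hrx hxz.le, hrx, le_trans hrx hxy]
      rw [rowFold_pass _ _ hall1, rowFold_pass _ _ hall2]
      obtain ⟨h1, h2⟩ := ih hs' hxy hyz
      exact ⟨by rw [h1], h2⟩
    · rcases lt_or_ge z r with hzr | hrz
      · -- z < r (hence y < z < r)
        have hyr : y < r := lt_trans hyz hzr
        cases R' with
        | nil =>
          have e1 : rowBump x [r] = ([x], some r) := rowBump_cons_lt [] hxr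
          have e2 : rowBump z [x] = ([x, z], none) := by
            rw [rowBump_cons_le [] hxz.le, rowBump_nil]
          have e3 : rowBump y [x, z] = ([x, y], some z) := by
            rw [rowBump_cons_le [z] hxy, rowBump_cons_lt [] hyz]
          have e4 : rowBump z [r] = ([z], some r) := rowBump_cons_lt [] hzr
          have e5 : rowBump x [z] = ([x], some z) := rowBump_cons_lt [] hxz
          have e6 : rowBump y [x] = ([x, y], none) := by
            rw [rowBump_cons_le [] hxy, rowBump_nil]
          rw [rowFold_three, rowFold_three]
          simp only [e1, e2, e3, e4, e5, e6, Option.toList_some, Option.toList_none,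
            List.nil_append, List.append_nil, List.cons_append, List.singleton_append]
          exact ⟨trivial, Or.inl trivial⟩
        | cons r₂ R₂ =>
          have hrr₂ : r ≤ r₂ := hr r₂ (by simp)
          have hzr₂ : z < r₂ := lt_of_lt_of_le hzr hrr₂
          have hyr₂ : y < r₂ := lt_trans hyz hzr₂
          have e1 : rowBump x (r :: r₂ :: R₂) = (x :: r₂ :: R₂, some r) :=
            rowBump_cons_lt _ hxr
          have e2 : rowBump z (x :: r₂ :: R₂) = (x :: z :: R₂, some r₂) := by
            rw [rowBump_cons_le _ hxz.le, rowBump_cons_lt _ hzr₂]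
          have e3 : rowBump y (x :: z :: R₂) = (x :: y :: R₂, some z) := by
            rw [rowBump_cons_le _ hxy, rowBump_cons_lt _ hyz]
          have e4 : rowBump z (r :: r₂ :: R₂) = (z :: r₂ :: R₂, some r) :=
            rowBump_cons_lt _ hzr
          have e5 : rowBump x (z :: r₂ :: R₂) = (x :: r₂ :: R₂, some z) :=
            rowBump_cons_lt _ hxz
          have e6 : rowBump y (x :: r₂ :: R₂) = (x :: y :: R₂, some r₂) := by
            rw [rowBump_cons_le _ hxy, rowBump_cons_lt _ hyr₂]
          rw [rowFold_three, rowFold_three]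
          simp only [e1, e2, e3, e4, e5, e6, Option.toList_some, Option.toList_none,
            List.nil_append, List.append_nil, List.cons_append, List.singleton_append]
          exact ⟨trivial, Or.inr (Or.inr ⟨z, r, r₂, hzr, hrr₂, rfl, rfl⟩)⟩
      · -- x < r ≤ z
        have e1 : rowBump x (r :: R') = (x :: R', some r) := rowBump_cons_lt _ hxr
        have e2 : rowBump z (x :: R') =
            (x :: (rowBump z R').1, (rowBump z R').2) := rowBump_cons_le _ hxz.le
        have e3 : rowBump y (x :: (rowBump z R').1) =
            (x :: (rowBump y (rowBump z R').1).1, (rowBump y (rowBump z R').1).2) :=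
          rowBump_cons_le _ hxy
        have e4 : rowBump z (r :: R') =
            (r :: (rowBump z R').1, (rowBump z R').2) := rowBump_cons_le _ hrz
        have e5 : rowBump x (r :: (rowBump z R').1) =
            (x :: (rowBump z R').1, some r) := rowBump_cons_lt _ hxr
        rw [rowFold_three, rowFold_three]
        simp only [e1, e2, e3, e4, e5, Option.toList_some, Option.toList_none,
          List.nil_append, List.append_nil, List.cons_append, List.singleton_append]
        rcases hbz : (rowBump z R').2 with _ | βz
        · simp only [Option.toList_none, List.nil_append, List.append_nil, List.singleton_append, List.cons_append]
          exact ⟨trivial, Or.inl trivial⟩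
        · have hz_mem : z ∈ (rowBump z R').1 := rowBump_self_mem z R'
          have hsz : (rowBump z R').1.Pairwise (· ≤ ·) := rowBump_sorted hs'
          obtain ⟨βy, hby, hbyz⟩ := rowBump_snd_min hsz hz_mem hyz
          have hrβy : r ≤ βy := by
            rcases rowBump_fst_mem (rowBump_snd_mem hby) with h | h
            · exact h ▸ hrz
            · exact hr _ h
          have hβyβz : βy < βz := lt_of_le_of_lt hbyz (rowBump_lt_snd hbz)
          refine ⟨trivial, Or.inr ?_⟩
          simp only [hby, Option.toList_some, List.singleton_append, List.cons_append, List.nil_append, List.append_nil]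
          exact Or.inl ⟨r, βy, βz, hrβy, hβyβz, rfl, rfl⟩

lemma RTL3b : ∀ {R : List α}, R.Pairwise (· ≤ ·) → ∀ {x y z : α}, x < y → y ≤ z →
    (rowFold R [y, z, x]).1 = (rowFold R [y, x, z]).1 ∧
      ((rowFold R [y, z, x]).2 = (rowFold R [y, x, z]).2 ∨
        KRel3 (rowFold R [y, z, x]).2 (rowFold R [y, x, z]).2) := by
  intro R
  induction R with
  | nil =>
    intro _ x y z hxy hyz
    have hxz : x ≤ z := le_of_lt (lt_of_lt_of_le hxy hyz)
    have e1 : rowBump y ([] : List α) = ([y], none) := rowBump_nil y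
    have e2 : rowBump z [y] = ([y, z], none) := by
      rw [rowBump_cons_le [] hyz, rowBump_nil]
    have e3 : rowBump x [y, z] = ([x, z], some y) := rowBump_cons_lt [z] hxy
    have e4 : rowBump x [y] = ([x], some y) := rowBump_cons_lt [] hxy
    have e5 : rowBump z [x] = ([x, z], none) := by
      rw [rowBump_cons_le [] hxz, rowBump_nil]
    rw [rowFold_three, rowFold_three]
    simp only [e1, e2, e3, e4, e5, Option.toList_some, Option.toList_none,
      List.nil_append, List.append_nil, List.cons_append, List.singleton_append]
    exact ⟨trivial, Or.inl trivial⟩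
  | cons r R' ih =>
    intro hs x y z hxy hyz
    obtain ⟨hr, hs'⟩ := List.pairwise_cons.1 hs
    have hxz : x ≤ z := le_of_lt (lt_of_lt_of_le hxy hyz)
    rcases le_or_gt r x with hrx | hxr
    · have hall1 : ∀ w ∈ [y, z, x], r ≤ w := by
        intro w hw
        simp only [List.mem_cons, List.not_mem_nil, or_false] at hw
        rcases hw with rfl | rfl | rfl
        exacts [le_trans hrx hxy.le, le_trans hrx hxz, hrx]
      have hall2 : ∀ w ∈ [y, x, z], r ≤ w := by
        intro w hw
        simp only [List.mem_cons, List.not_mem_nil, or_false] at hw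
        rcases hw with rfl | rfl | rfl
        exacts [le_trans hrx hxy.le, hrx, le_trans hrx hxz]
      rw [rowFold_pass _ _ hall1, rowFold_pass _ _ hall2]
      obtain ⟨h1, h2⟩ := ih hs' hxy hyz
      exact ⟨by rw [h1], h2⟩
    · rcases le_or_gt r y with hry | hyr
      · -- x < r ≤ y
        have e1 : rowBump y (r :: R') =
            (r :: (rowBump y R').1, (rowBump y R').2) := rowBump_cons_le _ hry
        have e2 : rowBump z (r :: (rowBump y R').1) =
            (r :: (rowBump z (rowBump y R').1).1, (rowBump z (rowBump y R').1).2) :=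
          rowBump_cons_le _ (le_trans hry hyz)
        have e3 : rowBump x (r :: (rowBump z (rowBump y R').1).1) =
            (x :: (rowBump z (rowBump y R').1).1, some r) := rowBump_cons_lt _ hxr
        have e4 : rowBump x (r :: (rowBump y R').1) =
            (x :: (rowBump y R').1, some r) := rowBump_cons_lt _ hxr
        have e5 : rowBump z (x :: (rowBump y R').1) =
            (x :: (rowBump z (rowBump y R').1).1, (rowBump z (rowBump y R').1).2) :=
          rowBump_cons_le _ hxz
        rw [rowFold_three, rowFold_three]
        simp only [e1, e2, e3, e4, e5, Option.toList_some, Option.toList_none,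
          List.nil_append, List.append_nil, List.cons_append, List.singleton_append]
        rcases hbz : (rowBump z (rowBump y R').1).2 with _ | βz
        · simp only [Option.toList_none, List.nil_append, List.append_nil, List.singleton_append, List.cons_append]
          exact ⟨trivial, Or.inl trivial⟩
        · have hbyne : (rowBump y R').2 ≠ none := by
            intro hnone
            have h1 : ∀ e ∈ R', e ≤ y := rowBump_snd_none_le hnone
            have h2 : (rowBump y R').1 = R' ++ [y] := by rw [rowBump_of_forall_le h1]
            have h3 : ∀ e ∈ (rowBump y R').1, e ≤ z := by
              intro e he
              rw [h2] at he
              rcases List.mem_append.1 he with h | h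
              · exact le_trans (h1 e h) hyz
              · simp at h; exact h ▸ hyz
            have h4 := rowBump_of_forall_le h3
            rw [h4] at hbz
            simp at hbz
          rcases hby' : (rowBump y R').2 with _ | βy
          · exact absurd hby' hbyne
          · have hyβy : y < βy := rowBump_lt_snd hby'
            have hrβy : r < βy := lt_of_le_of_lt hry hyβy
            have hβzmem : βz ∈ (rowBump y R').1 := rowBump_snd_mem hbz
            have hzβz : z < βz := rowBump_lt_snd hbz
            have hβzR' : βz ∈ R' := by
              rcases rowBump_fst_mem hβzmem with h | h
              · exact absurd hzβz (by rw [h]; exact not_lt.2 hyz)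
              · exact h
            obtain ⟨b, hb, hbβz⟩ := rowBump_snd_min hs' hβzR' (lt_of_le_of_lt hyz hzβz)
            rw [hby'] at hb
            have hβyβz : βy ≤ βz := by
              rw [Option.some_inj.1 hb]; exact hbβz
            refine ⟨trivial, Or.inr ?_⟩
            simp only [hby', Option.toList_some, List.singleton_append, List.cons_append, List.nil_append, List.append_nil]
            exact Or.inr ⟨r, βy, βz, hrβy, hβyβz, rfl, rfl⟩
      · -- x < y < r
        have e1 : rowBump y (r :: R') = (y :: R', some r) := rowBump_cons_lt _ hyr
        have e2 : rowBump z (y :: R') =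
            (y :: (rowBump z R').1, (rowBump z R').2) := rowBump_cons_le _ hyz
        have e3 : rowBump x (y :: (rowBump z R').1) =
            (x :: (rowBump z R').1, some y) := rowBump_cons_lt _ hxy
        have e4 : rowBump x (y :: R') = (x :: R', some y) := rowBump_cons_lt _ hxy
        have e5 : rowBump z (x :: R') =
            (x :: (rowBump z R').1, (rowBump z R').2) := rowBump_cons_le _ hxz
        rw [rowFold_three, rowFold_three]
        simp only [e1, e2, e3, e4, e5, Option.toList_some, Option.toList_none,
          List.nil_append, List.append_nil, List.cons_append, List.singleton_append]
        rcases hbz : (rowBump z R').2 with _ | βz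
        · simp only [Option.toList_none, List.nil_append, List.append_nil, List.singleton_append, List.cons_append]
          exact ⟨trivial, Or.inl trivial⟩
        · have hrβz : r ≤ βz := hr _ (rowBump_snd_mem hbz)
          refine ⟨trivial, Or.inr ?_⟩
          exact Or.inr ⟨y, r, βz, hyr, hrβz, rfl, rfl⟩

lemma RTL3 {R : List α} (hs : R.Pairwise (· ≤ ·)) {W1 W2 : List α} (h : KRel3 W1 W2) :
    (rowFold R W1).1 = (rowFold R W2).1 ∧
      ((rowFold R W1).2 = (rowFold R W2).2 ∨ KRel3 (rowFold R W1).2 (rowFold R W2).2) := by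
  rcases h with ⟨x, y, z, hxy, hyz, rfl, rfl⟩ | ⟨x, y, z, hxy, hyz, rfl, rfl⟩
  · exact RTL3a hs hxy hyz
  · exact RTL3b hs hxy hyz

def RowsSorted (T : List (List α)) : Prop := ∀ R ∈ T, R.Pairwise (· ≤ ·)

@[simp] lemma tabInsert_nil (x : α) : tabInsert ([] : List (List α)) x = [[x]] := rfl

lemma insWord_nil_KRel3 {W1 W2 : List α} (h : KRel3 W1 W2) :
    insWord ([] : List (List α)) W1 = insWord ([] : List (List α)) W2 := by
  rcases h with ⟨x, y, z, hxy, hyz, rfl, rfl⟩ | ⟨x, y, z, hxy, hyz, rfl, rfl⟩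
  · have hxz : x < z := lt_of_le_of_lt hxy hyz
    have e1 : rowBump z [x] = ([x, z], none) := by
      rw [rowBump_cons_le [] hxz.le, rowBump_nil]
    have e2 : rowBump y [x, z] = ([x, y], some z) := by
      rw [rowBump_cons_le [z] hxy, rowBump_cons_lt [] hyz]
    have e3 : rowBump x [z] = ([x], some z) := rowBump_cons_lt [] hxz
    have e4 : rowBump y [x] = ([x, y], none) := by
      rw [rowBump_cons_le [] hxy, rowBump_nil]
    have t1 : tabInsert ([] : List (List α)) x = [[x]] := rfl
    have t2 : tabInsert [[x]] z = [[x, z]] := tabInsert_cons_none [] e1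
    have t3 : tabInsert [[x, z]] y = [[x, y], [z]] := by
      rw [tabInsert_cons_some [] e2, tabInsert_nil]
    have t4 : tabInsert ([] : List (List α)) z = [[z]] := rfl
    have t5 : tabInsert [[z]] x = [[x], [z]] := by
      rw [tabInsert_cons_some [] e3, tabInsert_nil]
    have t6 : tabInsert [[x], [z]] y = [[x, y], [z]] := tabInsert_cons_none [[z]] e4
    show tabInsert (tabInsert (tabInsert [] x) z) y = tabInsert (tabInsert (tabInsert [] z) x) y
    rw [t1, t2, t3, t4, t5, t6]
  · have hxz : x ≤ z := le_of_lt (lt_of_lt_of_le hxy hyz)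
    have e1 : rowBump z [y] = ([y, z], none) := by
      rw [rowBump_cons_le [] hyz, rowBump_nil]
    have e2 : rowBump x [y, z] = ([x, z], some y) := rowBump_cons_lt [z] hxy
    have e3 : rowBump x [y] = ([x], some y) := rowBump_cons_lt [] hxy
    have e4 : rowBump z [x] = ([x, z], none) := by
      rw [rowBump_cons_le [] hxz, rowBump_nil]
    have t1 : tabInsert ([] : List (List α)) y = [[y]] := rfl
    have t2 : tabInsert [[y]] z = [[y, z]] := tabInsert_cons_none [] e1
    have t3 : tabInsert [[y, z]] x = [[x, z], [y]] := by
      rw [tabInsert_cons_some [] e2, tabInsert_nil]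
    have t4 : tabInsert [[y]] x = [[x], [y]] := by
      rw [tabInsert_cons_some [] e3, tabInsert_nil]
    have t5 : tabInsert [[x], [y]] z = [[x, z], [y]] := tabInsert_cons_none [[y]] e4
    show tabInsert (tabInsert (tabInsert [] y) z) x = tabInsert (tabInsert (tabInsert [] y) x) z
    rw [t1, t2, t3, t4, t5]

lemma rowsSorted_cons {R : List α} {Rs : List (List α)} :
    RowsSorted (R :: Rs) ↔ R.Pairwise (· ≤ ·) ∧ RowsSorted Rs := by
  constructor
  · intro h
    exact ⟨h R (by simp), fun S hS => h S (by simp [hS])⟩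
  · rintro ⟨h1, h2⟩ S hS
    rcases List.mem_cons.1 hS with h | h
    · exact h ▸ h1
    · exact h2 S h

lemma insWord_KRel3 : ∀ (T : List (List α)), RowsSorted T → ∀ {W1 W2 : List α},
    KRel3 W1 W2 → insWord T W1 = insWord T W2
  | [], _, W1, W2, h => insWord_nil_KRel3 h
  | R :: Rs, hT, W1, W2, h => by
    obtain ⟨hR, hRs⟩ := rowsSorted_cons.1 hT
    rw [insWord_cons_row, insWord_cons_row]
    obtain ⟨h1, h2⟩ := RTL3 hR h
    rw [h1]
    rcases h2 with h2 | h2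
    · rw [h2]
    · rw [insWord_KRel3 Rs hRs h2]


/-! ### Sortedness invariants and the carrier exchange lemma -/

lemma tabInsert_rowsSorted : ∀ {T : List (List α)}, RowsSorted T → ∀ (x : α),
    RowsSorted (tabInsert T x)
  | [], _, x => by
    intro R hR
    simp only [tabInsert_nil, List.mem_singleton] at hR
    subst hR; exact List.pairwise_singleton _ x
  | R :: Rs, hT, x => by
    obtain ⟨hR, hRs⟩ := rowsSorted_cons.1 hT
    rcases hb : rowBump x R with ⟨R', ob⟩
    have hR' : R'.Pairwise (· ≤ ·) := by
      have := rowBump_sorted (x := x) hR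
      rw [hb] at this; exact this
    cases ob with
    | none =>
      rw [tabInsert_cons_none Rs hb]
      exact rowsSorted_cons.2 ⟨hR', hRs⟩
    | some b =>
      rw [tabInsert_cons_some Rs hb]
      exact rowsSorted_cons.2 ⟨hR', tabInsert_rowsSorted hRs b⟩

lemma insWord_rowsSorted : ∀ (W : List α) {T : List (List α)}, RowsSorted T →
    RowsSorted (insWord T W)
  | [], _, hT => hT
  | w :: W, T, hT => by
    rw [insWord_cons]
    exact insWord_rowsSorted W (tabInsert_rowsSorted hT w)

lemma chainP1 : ∀ (C2 : List α) (T : List (List α)), RowsSorted T → ∀ {v a : α}, v < a →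
    (∀ d ∈ C2, a ≤ d) → C2.Pairwise (· ≤ ·) →
    insWord T (a :: (C2 ++ [v])) = insWord T (a :: v :: C2)
  | [], T, _, v, a, _, _, _ => rfl
  | d :: C2, T, hT, v, a, hva, had, hs => by
    obtain ⟨hd, hs'⟩ := List.pairwise_cons.1 hs
    have had' : a ≤ d := had d (by simp)
    have hvd : v < d := lt_of_lt_of_le hva had'
    calc insWord T (a :: ((d :: C2) ++ [v]))
        = insWord (tabInsert T a) (d :: (C2 ++ [v])) := rfl
      _ = insWord (tabInsert T a) (d :: v :: C2) :=
          chainP1 C2 (tabInsert T a) (tabInsert_rowsSorted hT a) hvd hd hs'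
      _ = insWord T ([a, d, v] ++ C2) := rfl
      _ = insWord T ([a, v, d] ++ C2) := by
          rw [insWord_append, insWord_append,
            insWord_KRel3 T hT (Or.inr ⟨v, a, d, hva, had', rfl, rfl⟩)]
      _ = insWord T (a :: v :: d :: C2) := rfl

lemma chainP2 : ∀ (C1 : List α) (T : List (List α)), RowsSorted T → ∀ {v a : α} (C2 : List α),
    v < a → (∀ e ∈ C1, e ≤ v) → C1.Pairwise (· ≤ ·) →
    insWord T (C1 ++ a :: v :: C2) = insWord T (a :: (C1 ++ v :: C2))
  | [], _, _, v, a, C2, _, _, _ => rfl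
  | c :: C1, T, hT, v, a, C2, hva, hcv, hs => by
    obtain ⟨hc, hs'⟩ := List.pairwise_cons.1 hs
    have hcv' : c ≤ v := hcv c (by simp)
    cases C1 with
    | nil =>
      calc insWord T ([c] ++ a :: v :: C2)
          = insWord T ([c, a, v] ++ C2) := rfl
        _ = insWord T ([a, c, v] ++ C2) := by
            rw [insWord_append, insWord_append,
              insWord_KRel3 T hT (Or.inl ⟨c, v, a, hcv', hva, rfl, rfl⟩)]
        _ = insWord T (a :: ([c] ++ v :: C2)) := rfl
    | cons c₁ C1' =>
      have hcc₁ : c ≤ c₁ := hc c₁ (by simp)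
      have hc₁a : c₁ < a := lt_of_le_of_lt (hcv c₁ (by simp)) hva
      calc insWord T ((c :: c₁ :: C1') ++ a :: v :: C2)
          = insWord (tabInsert T c) ((c₁ :: C1') ++ a :: v :: C2) := rfl
        _ = insWord (tabInsert T c) (a :: ((c₁ :: C1') ++ v :: C2)) :=
            chainP2 (c₁ :: C1') (tabInsert T c) (tabInsert_rowsSorted hT c) C2 hva
              (fun e he => hcv e (List.mem_cons_of_mem _ he)) hs'
        _ = insWord T ([c, a, c₁] ++ (C1' ++ v :: C2)) := rfl
        _ = insWord T ([a, c, c₁] ++ (C1' ++ v :: C2)) := by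
            rw [insWord_append T [c, a, c₁], insWord_append T [a, c, c₁],
              insWord_KRel3 T hT (Or.inl ⟨c, c₁, a, hcc₁, hc₁a, rfl, rfl⟩)]
        _ = insWord T (a :: ((c :: c₁ :: C1') ++ v :: C2)) := rfl

lemma rowBump_split : ∀ {C : List α}, C.Pairwise (· ≤ ·) → ∀ {v b : α} {C' : List α},
    rowBump v C = (C', some b) →
    ∃ C1 C2, C = C1 ++ b :: C2 ∧ C' = C1 ++ v :: C2 ∧ (∀ e ∈ C1, e ≤ v) ∧ v < b
  | [], _, v, b, C', h => by simp at h
  | a :: C, hs, v, b, C', h => by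
    obtain ⟨ha, hs'⟩ := List.pairwise_cons.1 hs
    rcases lt_or_ge v a with hlt | hle
    · rw [rowBump_cons_lt _ hlt] at h
      injection h with h1 h2
      injection h2 with h2
      refine ⟨[], C, by simp [h2], by simp [h1.symm], by simp, h2 ▸ hlt⟩
    · rw [rowBump_cons_le _ hle] at h
      injection h with h1 h2
      have hrec : rowBump v C = ((rowBump v C).1, some b) := by
        rw [← h2]
      obtain ⟨C1, C2, hC, hC', hle1, hvb⟩ := rowBump_split hs' hrec
      refine ⟨a :: C1, C2, by simp [hC], by simp [← h1, hC'], ?_, hvb⟩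
      intro e he
      rcases List.mem_cons.1 he with rfl | he
      · exact hle
      · exact hle1 e he

lemma insert_carrier {C C' : List α} {v b : α} (hC : C.Pairwise (· ≤ ·))
    (h : rowBump v C = (C', some b)) {T : List (List α)} (hT : RowsSorted T) :
    insWord T (C ++ [v]) = insWord T (b :: C') := by
  obtain ⟨C1, C2, rfl, rfl, h1, hvb⟩ := rowBump_split hC h
  obtain ⟨hC1, hbC2, hcross⟩ := List.pairwise_append.1 hC
  obtain ⟨hb, hC2⟩ := List.pairwise_cons.1 hbC2
  calc insWord T ((C1 ++ b :: C2) ++ [v])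
      = insWord T (C1 ++ (b :: (C2 ++ [v]))) := by rw [List.append_assoc]; rfl
    _ = insWord (insWord T C1) (b :: (C2 ++ [v])) := insWord_append ..
    _ = insWord (insWord T C1) (b :: v :: C2) :=
        chainP1 C2 _ (insWord_rowsSorted C1 hT) hvb hb hC2
    _ = insWord T (C1 ++ b :: v :: C2) := (insWord_append ..).symm
    _ = insWord T (b :: (C1 ++ v :: C2)) := chainP2 C1 T hT C2 hvb h1 hC1


/-! ### The box-ball scan with a carrier -/

variable {m : ℕ}

/-- Full carrier scan: the carrier (a weakly increasing word) interacts with every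
ball of color `< n` by row bumping, picks nothing from other balls, and drops its
smallest letter into every empty box. -/
def Sr (n : ℕ) : List (Fin m) → List (Option (Fin m)) → List (Option (Fin m))
  | _, [] => []
  | C, none :: t =>
    match C with
    | [] => none :: Sr n [] t
    | b :: C₂ => some b :: Sr n C₂ t
  | C, some x :: t =>
    if (x : ℕ) < n then (rowBump x C).2 :: Sr n (rowBump x C).1 t
    else some x :: Sr n C t

@[simp] lemma Sr_nil (n : ℕ) (C : List (Fin m)) : Sr n C [] = [] := by
  cases C <;> rfl

@[simp] lemma Sr_none_nilC (n : ℕ) (t : List (Option (Fin m))) :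
    Sr n [] (none :: t) = none :: Sr n [] t := rfl

@[simp] lemma Sr_none_cons (n : ℕ) (b : Fin m) (C₂ : List (Fin m))
    (t : List (Option (Fin m))) : Sr n (b :: C₂) (none :: t) = some b :: Sr n C₂ t := rfl

lemma Sr_some_lt {n : ℕ} {x : Fin m} (C : List (Fin m)) (t : List (Option (Fin m)))
    (h : (x : ℕ) < n) :
    Sr n C (some x :: t) = (rowBump x C).2 :: Sr n (rowBump x C).1 t := by
  cases C <;> simp [Sr, h]

lemma Sr_some_ge {n : ℕ} {x : Fin m} (C : List (Fin m)) (t : List (Option (Fin m)))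
    (h : ¬ (x : ℕ) < n) : Sr n C (some x :: t) = some x :: Sr n C t := by
  cases C <;> simp [Sr, h]

/-- The carrier remaining after the scan. -/
def fcr (n : ℕ) : List (Fin m) → List (Option (Fin m)) → List (Fin m)
  | C, [] => C
  | C, none :: t => fcr n C.tail t
  | C, some x :: t => if (x : ℕ) < n then fcr n (rowBump x C).1 t else fcr n C t

@[simp] lemma fcr_nil (n : ℕ) (C : List (Fin m)) : fcr n C [] = C := rfl

@[simp] lemma fcr_none (n : ℕ) (C : List (Fin m)) (t : List (Option (Fin m))) :
    fcr n C (none :: t) = fcr n C.tail t := rfl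

lemma fcr_some_lt {n : ℕ} {x : Fin m} (C : List (Fin m)) (t : List (Option (Fin m)))
    (h : (x : ℕ) < n) : fcr n C (some x :: t) = fcr n (rowBump x C).1 t := by
  simp [fcr, h]

lemma fcr_append (n : ℕ) : ∀ (t₁ t₂ : List (Option (Fin m))) (C : List (Fin m)),
    fcr n C (t₁ ++ t₂) = fcr n (fcr n C t₁) t₂
  | [], t₂, C => rfl
  | none :: t₁, t₂, C => by
    rw [List.cons_append, fcr_none, fcr_none, fcr_append n t₁ t₂]
  | some x :: t₁, t₂, C => by
    by_cases h : (x : ℕ) < n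
    · rw [List.cons_append, fcr_some_lt _ _ h, fcr_some_lt _ _ h, fcr_append n t₁ t₂]
    · simp only [List.cons_append, fcr, if_neg h]
      exact fcr_append n t₁ t₂ C

lemma fcr_replicate (n : ℕ) : ∀ (R : ℕ) (C : List (Fin m)),
    fcr n C (List.replicate R none) = C.drop R
  | 0, C => by simp
  | R + 1, C => by
    rw [List.replicate_succ, fcr_none, fcr_replicate n R]
    cases C <;> simp

lemma fcr_length_le (n : ℕ) : ∀ (t : List (Option (Fin m))) (C : List (Fin m)),
    (fcr n C t).length ≤ C.length + (t.filterMap id).length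
  | [], C => by simp
  | none :: t, C => by
    rw [fcr_none]
    calc (fcr n C.tail t).length ≤ C.tail.length + (t.filterMap id).length :=
          fcr_length_le n t C.tail
      _ ≤ C.length + ((none :: t : List (Option (Fin m))).filterMap id).length := by
          have := List.length_tail (l := C)
          simp only [List.filterMap_cons_none, id]
          omega
  | some x :: t, C => by
    have hfm : ((some x :: t : List (Option (Fin m))).filterMap id) = x :: t.filterMap id := by
      simp
    by_cases h : (x : ℕ) < n
    · rw [fcr_some_lt _ _ h, hfm]
      calc (fcr n (rowBump x C).1 t).length
          ≤ (rowBump x C).1.length + (t.filterMap id).length := fcr_length_le n t _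
        _ ≤ C.length + (x :: t.filterMap id).length := by
            have := rowBump_length (x := x) C
            simp; omega
    · simp only [fcr, if_neg h, hfm]
      calc (fcr n C t).length ≤ C.length + (t.filterMap id).length := fcr_length_le n t C
        _ ≤ C.length + (x :: t.filterMap id).length := by simp


/-! ### Telescoping: the P-symbol is invariant under the full-carrier scan -/

lemma rowBump_fst_of_none {x : α} {C : List α} (h : (rowBump x C).2 = none) :
    (rowBump x C).1 = C ++ [x] := by
  have := rowBump_of_forall_le (rowBump_snd_none_le h)
  rw [this]

lemma telescope : ∀ (t : List (Option (Fin m))) (C : List (Fin m)) (T : List (List (Fin m))),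
    C.Pairwise (· ≤ ·) → RowsSorted T → fcr m C t = [] →
    insWord T (C ++ t.filterMap id) = insWord T ((Sr m C t).filterMap id)
  | [], C, T, _, _, hf => by
    rw [fcr_nil] at hf
    subst hf
    simp
  | none :: t, C, T, hC, hT, hf => by
    cases C with
    | nil =>
      rw [Sr_none_nilC]
      simp only [List.filterMap_cons_none, id, List.nil_append]
      exact telescope t [] T hC hT (by simpa using hf)
    | cons b C₂ =>
      rw [Sr_none_cons]
      have hC₂ : C₂.Pairwise (· ≤ ·) := (List.pairwise_cons.1 hC).2
      have hf' : fcr m C₂ t = [] := by simpa using hf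
      calc insWord T ((b :: C₂) ++ t.filterMap id)
          = insWord (tabInsert T b) (C₂ ++ t.filterMap id) := rfl
        _ = insWord (tabInsert T b) ((Sr m C₂ t).filterMap id) :=
            telescope t C₂ (tabInsert T b) hC₂ (tabInsert_rowsSorted hT b) hf'
        _ = insWord T ((some b :: Sr m C₂ t).filterMap id) := by
            rw [show ((some b :: Sr m C₂ t).filterMap id) = b :: (Sr m C₂ t).filterMap id
              from by simp]
            rfl
  | some x :: t, C, T, hC, hT, hf => by
    have hx : (x : ℕ) < m := x.isLt
    rw [Sr_some_lt C t hx]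
    rw [fcr_some_lt C t hx] at hf
    have hCx : (rowBump x C).1.Pairwise (· ≤ ·) := rowBump_sorted hC
    have hfm : ((some x :: t : List (Option (Fin m))).filterMap id) = x :: t.filterMap id := by
      simp
    rw [hfm]
    rcases hb : (rowBump x C).2 with _ | b
    · -- no bump: the carrier becomes C ++ [x], nothing falls in the box
      have h1 : (rowBump x C).1 = C ++ [x] := rowBump_fst_of_none hb
      calc insWord T (C ++ x :: t.filterMap id)
          = insWord T ((C ++ [x]) ++ t.filterMap id) := by
            rw [List.append_assoc]; rfl
        _ = insWord T ((rowBump x C).1 ++ t.filterMap id) := by rw [h1]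
        _ = insWord T ((Sr m (rowBump x C).1 t).filterMap id) :=
            telescope t (rowBump x C).1 T hCx hT hf
        _ = insWord T ((none :: Sr m (rowBump x C).1 t).filterMap id) := by
            simp
    · -- bump: b falls into the box
      have hrb : rowBump x C = ((rowBump x C).1, some b) := by rw [← hb]
      calc insWord T (C ++ x :: t.filterMap id)
          = insWord T ((C ++ [x]) ++ t.filterMap id) := by
            rw [List.append_assoc]; rfl
        _ = insWord (insWord T (C ++ [x])) (t.filterMap id) := insWord_append ..
        _ = insWord (insWord T (b :: (rowBump x C).1)) (t.filterMap id) := by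
            rw [insert_carrier hC hrb hT]
        _ = insWord (tabInsert T b) ((rowBump x C).1 ++ t.filterMap id) := by
            rw [← insWord_append]; rfl
        _ = insWord (tabInsert T b) ((Sr m (rowBump x C).1 t).filterMap id) :=
            telescope t (rowBump x C).1 (tabInsert T b) hCx (tabInsert_rowsSorted hT b) hf
        _ = insWord T ((some b :: Sr m (rowBump x C).1 t).filterMap id) := by
            rw [show ((some b :: Sr m (rowBump x C).1 t).filterMap id)
                = b :: (Sr m (rowBump x C).1 t).filterMap id from by simp]
            rfl


/-! ### Single color scans and their composition -/

lemma rowBump_append_bump {x b : α} : ∀ {C : List α} (L : List α),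
    (rowBump x C).2 = some b → rowBump x (C ++ L) = ((rowBump x C).1 ++ L, some b)
  | [], L, h => by simp at h
  | a :: C, L, h => by
    rcases lt_or_ge x a with hx | hx
    · rw [rowBump_cons_lt C hx] at h
      rw [List.cons_append, rowBump_cons_lt _ hx, rowBump_cons_lt _ hx]
      simp at h
      simp [h]
    · rw [rowBump_cons_le C hx] at h
      rw [List.cons_append, rowBump_cons_le _ hx, rowBump_cons_le _ hx,
        rowBump_append_bump L h]
      simp [rowBump_cons_le C hx]

lemma rowBump_append_le {x : α} : ∀ {C : List α} (L : List α), (∀ e ∈ C, e ≤ x) →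
    rowBump x (C ++ L) = (C ++ (rowBump x L).1, (rowBump x L).2)
  | [], L, _ => by simp
  | a :: C, L, h => by
    rw [List.cons_append, rowBump_cons_le _ (h a (by simp)),
      rowBump_append_le L (fun e he => h e (List.mem_cons_of_mem _ he))]
    simp

lemma sorted_replicate (k : ℕ) (a : α) : (List.replicate k a).Pairwise (· ≤ ·) := by
  induction k with
  | zero => simp
  | succ k ih =>
    rw [List.replicate_succ, List.pairwise_cons]
    exact ⟨fun b hb => (List.eq_of_mem_replicate hb) ▸ le_rfl, ih⟩

/-- A single-color scan: the carrier consists of `k` balls of color `c`; it picks up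
every ball of color `c` and drops one into every empty box it passes while nonempty. -/
def scanC (c : Fin m) : ℕ → List (Option (Fin m)) → List (Option (Fin m))
  | _, [] => []
  | k, none :: t => if k = 0 then none :: scanC c 0 t else some c :: scanC c (k - 1) t
  | k, some d :: t => if d = c then none :: scanC c (k + 1) t else some d :: scanC c k t

@[simp] lemma scanC_nil (c : Fin m) (k : ℕ) : scanC c k [] = [] := rfl

lemma scanC_none_zero (c : Fin m) (t : List (Option (Fin m))) :
    scanC c 0 (none :: t) = none :: scanC c 0 t := rfl

lemma scanC_none_succ (c : Fin m) (k : ℕ) (t : List (Option (Fin m))) :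
    scanC c (k + 1) (none :: t) = some c :: scanC c k t := by
  simp [scanC]

lemma scanC_some_self (c : Fin m) (k : ℕ) (t : List (Option (Fin m))) :
    scanC c k (some c :: t) = none :: scanC c (k + 1) t := by
  simp [scanC]

lemma scanC_some_ne {c d : Fin m} (h : d ≠ c) (k : ℕ) (t : List (Option (Fin m))) :
    scanC c k (some d :: t) = some d :: scanC c k t := by
  simp [scanC, h]

/-- Composition: running the single-color scan for `c` after the carrier scan for colors
`< c` produces the carrier scan for colors `< c + 1`. -/
lemma scanC_Sr (c : Fin m) : ∀ (s : List (Option (Fin m))) (C : List (Fin m)) (k : ℕ),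
    C.Pairwise (· ≤ ·) → (∀ e ∈ C, (e : ℕ) < (c : ℕ)) →
    scanC c k (Sr (c : ℕ) C s) = Sr ((c : ℕ) + 1) (C ++ List.replicate k c) s
  | [], C, k, _, _ => by simp
  | none :: t, C, k, hC, hlt => by
    cases C with
    | nil =>
      rcases Nat.eq_zero_or_pos k with rfl | hk
      · rw [Sr_none_nilC, scanC_none_zero, scanC_Sr c t [] 0 hC hlt]
        simp
      · obtain ⟨k', rfl⟩ := Nat.exists_eq_add_of_lt hk
        rw [Sr_none_nilC]
        rw [show 0 + k' + 1 = k' + 1 by omega, scanC_none_succ,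
          scanC_Sr c t [] k' hC hlt]
        rw [show ([] : List (Fin m)) ++ List.replicate (k' + 1) c
            = c :: List.replicate k' c by simp [List.replicate_succ]]
        rw [Sr_none_cons]
        simp
    | cons b C₂ =>
      have hbc : b ≠ c := by
        intro h
        have := hlt b (by simp)
        rw [h] at this
        exact lt_irrefl _ this
      rw [Sr_none_cons, scanC_some_ne hbc,
        scanC_Sr c t C₂ k (List.pairwise_cons.1 hC).2 (fun e he => hlt e (by simp [he]))]
      rw [List.cons_append, Sr_none_cons]
  | some x :: t, C, k, hC, hlt => by
    rcases lt_trichotomy (x : ℕ) (c : ℕ) with hxc | hxc | hxc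
    · -- x < c : the small carrier interacts by row bumping
      have hx1 : (x : ℕ) < (c : ℕ) + 1 := by omega
      have hC' : (rowBump x C).1.Pairwise (· ≤ ·) := rowBump_sorted hC
      have hlt' : ∀ e ∈ (rowBump x C).1, (e : ℕ) < (c : ℕ) := by
        intro e he
        rcases rowBump_fst_mem he with rfl | he
        · exact hxc
        · exact hlt e he
      rw [Sr_some_lt C t hxc]
      rcases hb : (rowBump x C).2 with _ | b
      · -- no bump in the small carrier
        have h1 : (rowBump x C).1 = C ++ [x] := rowBump_fst_of_none hb
        have hCle : ∀ e ∈ C, e ≤ x := rowBump_snd_none_le hb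
        rcases Nat.eq_zero_or_pos k with rfl | hk
        · rw [scanC_none_zero, scanC_Sr c t _ 0 hC' hlt']
          rw [Sr_some_lt _ t hx1]
          rw [rowBump_append_le (List.replicate 0 c) hCle]
          simp [h1]
        · obtain ⟨k', rfl⟩ := Nat.exists_eq_add_of_lt hk
          rw [show 0 + k' + 1 = k' + 1 by omega] at *
          rw [scanC_none_succ, scanC_Sr c t _ k' hC' hlt']
          rw [Sr_some_lt _ t hx1]
          rw [rowBump_append_le (List.replicate (k' + 1) c) hCle]
          have hxltc : x < c := by
            rw [Fin.lt_def]; exact hxc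
          rw [show List.replicate (k' + 1) c = c :: List.replicate k' c from
            List.replicate_succ (a := c) (n := k')]
          rw [rowBump_cons_lt _ hxltc]
          rw [h1, List.append_assoc]
          rfl
      · -- bump: b ∈ C so b ≠ c
        have hbc : b ≠ c := by
          intro h
          have := hlt b (rowBump_snd_mem hb)
          rw [h] at this
          exact lt_irrefl _ this
        rw [scanC_some_ne hbc, scanC_Sr c t _ k hC' hlt']
        rw [Sr_some_lt _ t hx1]
        rw [rowBump_append_bump (List.replicate k c) hb]
    · -- x = c : the single-color scan picks up the ball
      have hx : x = c := Fin.ext hxc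
      subst hx
      have hxlt : ¬ (x : ℕ) < (x : ℕ) := lt_irrefl _
      rw [Sr_some_ge C t hxlt, scanC_some_self, scanC_Sr x t C (k + 1) hC hlt]
      rw [Sr_some_lt _ t (by omega : (x : ℕ) < (x : ℕ) + 1)]
      have hle : ∀ e ∈ C ++ List.replicate k x, e ≤ x := by
        intro e he
        rcases List.mem_append.1 he with he | he
        · exact le_of_lt (by rw [Fin.lt_def]; exact hlt e he)
        · exact (List.eq_of_mem_replicate he) ▸ le_rfl
      rw [rowBump_of_forall_le hle]
      rw [List.append_assoc, ← List.replicate_succ' (n := k) (a := x)]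
    · -- c < x : the ball passes through both
      have h1 : ¬ (x : ℕ) < (c : ℕ) := by omega
      have h2 : ¬ (x : ℕ) < (c : ℕ) + 1 := by omega
      have hxc' : x ≠ c := by
        intro h; rw [h] at hxc; exact lt_irrefl _ hxc
      rw [Sr_some_ge C t h1, scanC_some_ne hxc', scanC_Sr c t C k hC hlt,
        Sr_some_ge _ t h2]


/-! ### List-level ball moves equal the single-color scan -/

def cpos (c : Fin m) : List (Option (Fin m)) → List ℕ
  | [] => []
  | v :: t => if v = some c then 0 :: (cpos c t).map (· + 1) else (cpos c t).map (· + 1)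

/-- Replace the first `k` empty boxes by balls of color `c`. -/
def fill (c : Fin m) : ℕ → List (Option (Fin m)) → List (Option (Fin m))
  | _, [] => []
  | k, none :: t => if k = 0 then none :: fill c 0 t else some c :: fill c (k - 1) t
  | k, some d :: t => some d :: fill c k t

/-- Index of the first empty box. -/
def fni : List (Option (Fin m)) → Option ℕ
  | [] => none
  | none :: _ => some 0
  | some _ :: t => (fni t).map (· + 1)

def listMoveBall (s : List (Option (Fin m))) (p : ℕ) : List (Option (Fin m)) :=
  match fni (s.drop (p + 1)) with
  | none => s
  | some j => (s.set (p + 1 + j) (s.getD p none)).set p none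

@[simp] lemma fill_nil (c : Fin m) (k : ℕ) : fill c k [] = [] := rfl

lemma fill_none_zero (c : Fin m) (t : List (Option (Fin m))) :
    fill c 0 (none :: t) = none :: fill c 0 t := rfl

lemma fill_none_succ (c : Fin m) (k : ℕ) (t : List (Option (Fin m))) :
    fill c (k + 1) (none :: t) = some c :: fill c k t := by simp [fill]

lemma fill_some (c : Fin m) (k : ℕ) (d : Fin m) (t : List (Option (Fin m))) :
    fill c k (some d :: t) = some d :: fill c k t := rfl

lemma fill_zero (c : Fin m) : ∀ (t : List (Option (Fin m))), fill c 0 t = t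
  | [] => rfl
  | none :: t => by rw [fill_none_zero, fill_zero c t]
  | some d :: t => by rw [fill_some, fill_zero c t]

lemma listMoveBall_cons (v : Option (Fin m)) (t : List (Option (Fin m))) (p : ℕ) :
    listMoveBall (v :: t) (p + 1) = v :: listMoveBall t p := by
  unfold listMoveBall
  rw [List.drop_succ_cons]
  rcases h : fni (t.drop (p + 1)) with _ | j
  · rfl
  · simp only []
    rw [show p + 1 + 1 + j = (p + 1 + j) + 1 by omega]
    rw [List.set_cons_succ, List.getD_cons_succ, List.set_cons_succ]

lemma foldl_listMoveBall_cons (v : Option (Fin m)) :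
    ∀ (ps : List ℕ) (t : List (Option (Fin m))),
    List.foldl listMoveBall (v :: t) (ps.map (· + 1)) = v :: List.foldl listMoveBall t ps
  | [], t => rfl
  | p :: ps, t => by
    rw [List.map_cons, List.foldl_cons, List.foldl_cons, listMoveBall_cons,
      foldl_listMoveBall_cons v ps]

lemma fill_step (c : Fin m) : ∀ (t : List (Option (Fin m))) (k : ℕ),
    k < t.count none →
    ∃ j, fni (fill c k t) = some j ∧ (fill c k t).set j (some c) = fill c (k + 1) t
  | [], k, h => by simp at h
  | some d :: t, k, h => by
    have h' : k < t.count none := by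
      have : (some d :: t : List (Option (Fin m))).count none = t.count none := by
        rw [List.count_cons]
        simp
      omega
    obtain ⟨j, hj1, hj2⟩ := fill_step c t k h'
    refine ⟨j + 1, ?_, ?_⟩
    · rw [fill_some]
      show (fni (fill c k t)).map (· + 1) = some (j + 1)
      rw [hj1]; rfl
    · rw [fill_some, List.set_cons_succ, hj2, fill_some]
  | none :: t, 0, h => by
    refine ⟨0, ?_, ?_⟩
    · rw [fill_none_zero]; rfl
    · rw [fill_none_zero, fill_none_succ]
      rfl
  | none :: t, k + 1, h => by
    have h' : k < t.count none := by
      have : (none :: t : List (Option (Fin m))).count none = t.count none + 1 := by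
        rw [List.count_cons]
        simp
      omega
    obtain ⟨j, hj1, hj2⟩ := fill_step c t k h'
    refine ⟨j + 1, ?_, ?_⟩
    · rw [fill_none_succ]
      show (fni (fill c k t)).map (· + 1) = some (j + 1)
      rw [hj1]; rfl
    · rw [fill_none_succ, List.set_cons_succ, hj2, fill_none_succ]

lemma listMoveBall_zero (c : Fin m) {X : List (Option (Fin m))} {j : ℕ}
    (h : fni X = some j) :
    listMoveBall (some c :: X) 0 = none :: X.set j (some c) := by
  unfold listMoveBall
  rw [show (0 : ℕ) + 1 = 1 by rfl, show (some c :: X).drop 1 = X from rfl, h]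
  simp only []
  rw [show (0 : ℕ) + 1 + j = j + 1 by omega, List.set_cons_succ]
  rfl

lemma cpos_replicate (c : Fin m) (R : ℕ) : cpos c (List.replicate R none) = [] := by
  induction R with
  | zero => rfl
  | succ R ih =>
    rw [List.replicate_succ]
    show (if (none : Option (Fin m)) = some c then _ else (cpos c _).map (· + 1)) = []
    rw [if_neg (by simp), ih]
    rfl

lemma scanC_fill_replicate (c : Fin m) : ∀ (R k : ℕ),
    scanC c k (List.replicate R none) = fill c k (List.replicate R none)
  | 0, k => rfl
  | R + 1, k => by
    rw [List.replicate_succ]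
    rcases Nat.eq_zero_or_pos k with rfl | hk
    · rw [scanC_none_zero, fill_none_zero, scanC_fill_replicate c R]
    · obtain ⟨k', rfl⟩ := Nat.exists_eq_add_of_lt hk
      rw [show 0 + k' + 1 = k' + 1 by omega, scanC_none_succ, fill_none_succ,
        scanC_fill_replicate c R]

lemma cpos_cons_some_self (c : Fin m) (t : List (Option (Fin m))) :
    cpos c (some c :: t) = 0 :: (cpos c t).map (· + 1) := by
  show (if some c = some c then _ else _) = _
  rw [if_pos rfl]

lemma cpos_cons_ne (c : Fin m) {v : Option (Fin m)} (h : v ≠ some c)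
    (t : List (Option (Fin m))) : cpos c (v :: t) = (cpos c t).map (· + 1) := by
  show (if v = some c then _ else _) = _
  rw [if_neg h]

/-- moving the balls of color `c` one by one, leftmost first, equals the single-color
scan, provided there are enough empty boxes on the right. -/
lemma FK (c : Fin m) : ∀ (t₁ : List (Option (Fin m))) (R k : ℕ),
    k + t₁.count (some c) ≤ R →
    List.foldl listMoveBall (fill c k (t₁ ++ List.replicate R none))
        (cpos c (t₁ ++ List.replicate R none))
      = scanC c k (t₁ ++ List.replicate R none)
  | [], R, k, h => by
    rw [List.nil_append, cpos_replicate, List.foldl_nil, scanC_fill_replicate]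
  | some d :: t₁, R, k, h => by
    rw [List.cons_append]
    by_cases hd : d = c
    · subst hd
      have hcount : (some d :: t₁ : List (Option (Fin m))).count (some d)
          = t₁.count (some d) + 1 := by
        rw [List.count_cons]; simp
      rw [cpos_cons_some_self, fill_some, List.foldl_cons]
      have hX : k < (t₁ ++ List.replicate R none).count none := by
        rw [List.count_append, List.count_replicate_self]
        omega
      obtain ⟨j, hj1, hj2⟩ := fill_step d (t₁ ++ List.replicate R none) k hX
      rw [listMoveBall_zero d hj1, hj2, foldl_listMoveBall_cons,
        FK d t₁ R (k + 1) (by omega), scanC_some_self]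
    · have hne : (some d : Option (Fin m)) ≠ some c := by simp [hd]
      have hcount : (some d :: t₁ : List (Option (Fin m))).count (some c)
          = t₁.count (some c) := by
        rw [List.count_cons]; simp [hd]
      rw [cpos_cons_ne c hne, fill_some, foldl_listMoveBall_cons,
        FK c t₁ R k (by omega), scanC_some_ne hd]
  | none :: t₁, R, k, h => by
    rw [List.cons_append]
    have hcount : (none :: t₁ : List (Option (Fin m))).count (some c)
        = t₁.count (some c) := by
      rw [List.count_cons]; simp
    rcases Nat.eq_zero_or_pos k with rfl | hk
    · rw [cpos_cons_ne c (by simp), fill_none_zero, foldl_listMoveBall_cons,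
        FK c t₁ R 0 (by omega), scanC_none_zero]
    · obtain ⟨k', rfl⟩ := Nat.exists_eq_add_of_lt hk
      rw [show 0 + k' + 1 = k' + 1 by omega] at *
      rw [cpos_cons_ne c (by simp), fill_none_succ, foldl_listMoveBall_cons,
        FK c t₁ R k' (by omega), scanC_none_succ]


/-! ### Transfer between functions on ℕ and lists -/

def toFun (s : List (Option (Fin m))) : ℕ → Option (Fin m) := fun i => s.getD i none

lemma Sr_zero : ∀ (s : List (Option (Fin m))), Sr 0 [] s = s
  | [] => by simp
  | none :: t => by rw [Sr_none_nilC, Sr_zero t]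
  | some x :: t => by rw [Sr_some_ge _ _ (by omega), Sr_zero t]

lemma fill_replicate (c : Fin m) : ∀ (R k : ℕ), k ≤ R →
    fill c k (List.replicate R none) =
      List.replicate k (some c) ++ List.replicate (R - k) none
  | R, 0, _ => by rw [fill_zero]; simp
  | R, k + 1, h => by
    obtain ⟨R', rfl⟩ : ∃ R', R = R' + 1 := ⟨R - 1, by omega⟩
    rw [List.replicate_succ, fill_none_succ, fill_replicate c R' k (by omega)]
    rw [show (k + 1 : ℕ) = 1 + k by omega, List.replicate_add]
    simp [List.replicate_succ]
    omega

lemma scanC_trailing (c : Fin m) : ∀ (t₁ : List (Option (Fin m))) (R k : ℕ),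
    k + t₁.count (some c) ≤ R →
    ∃ w k', scanC c k (t₁ ++ List.replicate R none) = w ++ List.replicate (R - k') none
      ∧ w.length = t₁.length + k' ∧ k' ≤ k + t₁.count (some c)
  | [], R, k, h => by
    rw [List.nil_append, scanC_fill_replicate, fill_replicate c R k (by simpa using h)]
    exact ⟨List.replicate k (some c), k, rfl, by simp, by simp⟩
  | some d :: t₁, R, k, h => by
    rw [List.cons_append]
    by_cases hd : d = c
    · subst hd
      have hc : (some d :: t₁ : List (Option (Fin m))).count (some d)
          = t₁.count (some d) + 1 := by rw [List.count_cons]; simp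
      obtain ⟨w, k', h1, h2, h3⟩ := scanC_trailing d t₁ R (k + 1) (by omega)
      rw [scanC_some_self, h1]
      exact ⟨none :: w, k', rfl, by simp [h2]; omega, by omega⟩
    · have hc : (some d :: t₁ : List (Option (Fin m))).count (some c)
          = t₁.count (some c) := by rw [List.count_cons]; simp [hd]
      obtain ⟨w, k', h1, h2, h3⟩ := scanC_trailing c t₁ R k (by omega)
      rw [scanC_some_ne hd, h1]
      exact ⟨some d :: w, k', rfl, by simp [h2]; omega, by omega⟩
  | none :: t₁, R, k, h => by
    rw [List.cons_append]
    have hc : (none :: t₁ : List (Option (Fin m))).count (some c)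
        = t₁.count (some c) := by rw [List.count_cons]; simp
    rcases Nat.eq_zero_or_pos k with rfl | hk
    · obtain ⟨w, k', h1, h2, h3⟩ := scanC_trailing c t₁ R 0 (by omega)
      rw [scanC_none_zero, h1]
      exact ⟨none :: w, k', rfl, by simp [h2]; omega, by omega⟩
    · obtain ⟨k₀, rfl⟩ := Nat.exists_eq_add_of_lt hk
      rw [show 0 + k₀ + 1 = k₀ + 1 by omega] at *
      obtain ⟨w, k', h1, h2, h3⟩ := scanC_trailing c t₁ R k₀ (by omega)
      rw [scanC_none_succ, h1]
      exact ⟨some c :: w, k', rfl, by simp [h2]; omega, by omega⟩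

lemma getD_drop (s : List (Option (Fin m))) (n i : ℕ) :
    (s.drop n).getD i none = s.getD (n + i) none := by
  rw [List.getD_eq_getElem?_getD, List.getD_eq_getElem?_getD, List.getElem?_drop]

lemma fni_some_spec : ∀ {X : List (Option (Fin m))} {j : ℕ}, fni X = some j →
    X.getD j none = none ∧ j < X.length ∧ ∀ i < j, X.getD i none ≠ none
  | [], j, h => by simp [fni] at h
  | none :: t, j, h => by
    have hj : j = 0 := by
      have : (some 0 : Option ℕ) = some j := h
      simpa using this.symm
    subst hj
    exact ⟨rfl, by simp, fun i hi => absurd hi (by omega)⟩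
  | some d :: t, j, h => by
    have h' : (fni t).map (· + 1) = some j := h
    rcases ht : fni t with _ | j'
    · rw [ht] at h'; simp at h'
    · rw [ht] at h'
      have hj : j' + 1 = j := by simpa using h'
      subst hj
      obtain ⟨h1, h2, h3⟩ := fni_some_spec ht
      refine ⟨by simpa using h1, by simpa using h2, ?_⟩
      intro i hi
      cases i with
      | zero => simp
      | succ i => simpa using h3 i (by omega)

lemma fni_exists : ∀ {X : List (Option (Fin m))} {q : ℕ}, q < X.length →
    X.getD q none = none → ∃ j, fni X = some j ∧ j ≤ q
  | [], q, hq, _ => by simp at hq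
  | none :: t, q, _, _ => ⟨0, rfl, Nat.zero_le q⟩
  | some d :: t, q, hq, hqn => by
    cases q with
    | zero => simp at hqn
    | succ q =>
      obtain ⟨j, hj, hjq⟩ := fni_exists (by simpa using hq) (by simpa using hqn)
      exact ⟨j + 1, by show (fni t).map (· + 1) = _; rw [hj]; rfl, by omega⟩

open Classical in
lemma moveBall_toFun {s : List (Option (Fin m))} {p q : ℕ} (hpq : p < q)
    (hq : q < s.length) (hqnone : s.getD q none = none) :
    moveBall (toFun s) p = toFun (listMoveBall s p) := by
  have hex : ∃ r, p < r ∧ toFun s r = none := ⟨q, hpq, hqnone⟩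
  unfold moveBall
  rw [dif_pos hex]
  obtain ⟨hfind1, hfind2⟩ := Nat.find_spec hex
  have hfindle : Nat.find hex ≤ q := Nat.find_min' hex ⟨hpq, hqnone⟩
  have hfindlen : Nat.find hex < s.length := lt_of_le_of_lt hfindle hq
  have hplen : p < s.length := lt_trans hfind1 hfindlen
  obtain ⟨j, hj, hjle⟩ := fni_exists (X := s.drop (p + 1))
    (q := Nat.find hex - (p + 1))
    (by rw [List.length_drop]; omega)
    (by rw [getD_drop]; rw [show p + 1 + (Nat.find hex - (p + 1)) = Nat.find hex by omega]
        exact hfind2)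
  obtain ⟨hj1, hj2, hj3⟩ := fni_some_spec hj
  have hjabs : p + 1 + j = Nat.find hex := by
    have h1 : toFun s (p + 1 + j) = none := by
      show s.getD (p + 1 + j) none = none
      rw [← getD_drop]
      exact hj1
    have h2 : Nat.find hex ≤ p + 1 + j := Nat.find_min' hex ⟨by omega, h1⟩
    omega
  have hjlen : p + 1 + j < s.length := by omega
  rw [listMoveBall, hj]
  simp only []
  funext i
  show Function.update (Function.update (toFun s) p none) (Nat.find hex) (toFun s p) i
      = ((s.set (p + 1 + j) (s.getD p none)).set p none).getD i none
  rw [List.getD_eq_getElem?_getD, List.getElem?_set, List.getElem?_set]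
  by_cases hip : p = i
  · subst hip
    rw [if_pos rfl, if_pos (by rw [List.length_set]; omega)]
    rw [Function.update_apply, if_neg (by omega), Function.update_self]
    rfl
  · by_cases hiq : p + 1 + j = i
    · subst hiq
      rw [if_neg hip, if_pos rfl, if_pos hjlen]
      rw [Function.update_apply, if_pos (by omega)]
      rfl
    · rw [if_neg hip, if_neg hiq]
      rw [Function.update_apply, if_neg (by omega),
        Function.update_apply, if_neg (fun h => hip h.symm)]
      show s.getD i none = _
      rw [List.getD_eq_getElem?_getD]

lemma getD_junction {w : List (Option (Fin m))} {R : ℕ} (hR : 1 ≤ R) :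
    (w ++ List.replicate R none).getD w.length none = none := by
  rw [List.getD_eq_getElem?_getD, List.getElem?_append, if_neg (by omega)]
  simp

lemma listMoveBall_decomp (w : List (Option (Fin m))) (R p : ℕ) (hp : p < w.length)
    (hR : 1 ≤ R) :
    ∃ w' R', listMoveBall (w ++ List.replicate R none) p
        = w' ++ List.replicate R' none
      ∧ w.length ≤ w'.length ∧ w'.length + R' = w.length + R ∧ R ≤ R' + 1 := by
  set s := w ++ List.replicate R none with hs
  have hslen : s.length = w.length + R := by simp [hs]
  obtain ⟨j, hj, hjle⟩ := fni_exists (X := s.drop (p + 1)) (q := w.length - (p + 1))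
    (by rw [List.length_drop]; omega)
    (by rw [getD_drop, show p + 1 + (w.length - (p + 1)) = w.length by omega]
        exact getD_junction hR)
  have hjabs : p + 1 + j ≤ w.length := by omega
  rw [listMoveBall, hj]
  simp only []
  set v := s.getD p none with hv
  rcases lt_or_eq_of_le hjabs with hlt | heq
  · -- the ball lands inside w
    refine ⟨(w.set (p + 1 + j) v).set p none, R, ?_, by simp, by simp, by omega⟩
    rw [hs, List.set_append, if_pos (by omega), List.set_append, if_pos (by simp; omega)]
  · -- the ball lands on the first trailing empty box
    refine ⟨(w.set p none) ++ [v], R - 1, ?_, by simp, by simp; omega, by omega⟩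
    rw [hs, List.set_append, if_neg (by omega), heq, Nat.sub_self]
    rw [show List.replicate R (none : Option (Fin m))
        = none :: List.replicate (R - 1) none by
      rw [← List.replicate_succ]; congr 1; omega]
    rw [List.set_cons_zero, List.set_append, if_pos (by omega)]
    simp

lemma foldl_moveBall_toFun : ∀ (ps : List ℕ) (w : List (Option (Fin m))) (R : ℕ),
    (∀ p ∈ ps, p < w.length) → ps.length ≤ R →
    List.foldl moveBall (toFun (w ++ List.replicate R none)) ps
      = toFun (List.foldl listMoveBall (w ++ List.replicate R none) ps)
  | [], w, R, _, _ => rfl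
  | p :: ps, w, R, hps, hlen => by
    have hp := hps p (by simp)
    have hR : 1 ≤ R := by
      have : ps.length + 1 ≤ R := by simpa using hlen
      omega
    obtain ⟨w', R', heq, hlen', hsum, hR'⟩ := listMoveBall_decomp w R p hp hR
    rw [List.foldl_cons, List.foldl_cons]
    rw [moveBall_toFun (q := w.length) hp (by simp; omega) (getD_junction hR)]
    rw [heq]
    exact foldl_moveBall_toFun ps w' R'
      (fun r hr => lt_of_lt_of_le (hps r (List.mem_cons_of_mem _ hr)) hlen')
      (by
        have h2 : ps.length + 1 ≤ R := by simpa using hlen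
        omega)


/-! ### colorPositions and moveColor transfer -/

lemma cpos_mem (c : Fin m) : ∀ (s : List (Option (Fin m))) (p : ℕ),
    p ∈ cpos c s ↔ s.getD p none = some c
  | [], p => by simp [cpos]
  | v :: t, p => by
    by_cases hv : v = some c
    · subst hv
      rw [cpos_cons_some_self]
      cases p with
      | zero => simp
      | succ p =>
        rw [List.getD_cons_succ, ← cpos_mem c t p]
        constructor
        · intro h
          rcases List.mem_cons.1 h with h | h
          · omega
          · obtain ⟨q, hq, hq2⟩ := List.mem_map.1 h
            have : q = p := by omega
            exact this ▸ hq
        · intro h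
          exact List.mem_cons_of_mem _ (List.mem_map.2 ⟨p, h, rfl⟩)
    · rw [cpos_cons_ne c hv]
      cases p with
      | zero =>
        simp only [List.getD_cons_zero]
        constructor
        · intro h
          obtain ⟨q, _, hq2⟩ := List.mem_map.1 h
          omega
        · intro h
          exact absurd h hv
      | succ p =>
        rw [List.getD_cons_succ, ← cpos_mem c t p]
        constructor
        · intro h
          obtain ⟨q, hq, hq2⟩ := List.mem_map.1 h
          have : q = p := by omega
          exact this ▸ hq
        · intro h
          exact List.mem_map.2 ⟨p, h, rfl⟩

lemma cpos_sorted (c : Fin m) : ∀ (s : List (Option (Fin m))),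
    (cpos c s).Pairwise (· < ·)
  | [] => by simp [cpos]
  | v :: t => by
    have ih := cpos_sorted c t
    have hmap : ((cpos c t).map (· + 1)).Pairwise (· < ·) :=
      List.Pairwise.map _ (fun a b h => by omega) ih
    by_cases hv : v = some c
    · subst hv
      rw [cpos_cons_some_self]
      refine List.pairwise_cons.2 ⟨?_, hmap⟩
      intro b hb
      obtain ⟨q, _, hq2⟩ := List.mem_map.1 hb
      omega
    · rw [cpos_cons_ne c hv]
      exact hmap

lemma cpos_length (c : Fin m) : ∀ (s : List (Option (Fin m))),
    (cpos c s).length = s.count (some c)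
  | [] => rfl
  | v :: t => by
    rw [List.count_cons]
    by_cases hv : v = some c
    · subst hv
      rw [cpos_cons_some_self]
      simp only [List.length_cons, List.length_map, cpos_length c t, beq_self_eq_true,
        if_true]
    · rw [cpos_cons_ne c hv]
      simp [cpos_length c t, hv]

lemma colorPositions_toFun (c : Fin m) (s : List (Option (Fin m))) :
    colorPositions (toFun s) c = cpos c s := by
  classical
  have hsub : {p | toFun s p = some c} ⊆ Set.Iio s.length := by
    intro p hp
    by_contra hlt
    have hlen : s.length ≤ p := by simpa [Set.mem_Iio] using hlt
    have h1 : toFun s p = none := List.getD_eq_default _ _ hlen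
    have hp' : toFun s p = some c := hp
    rw [h1] at hp'
    cases hp'
  have hfin : {p | toFun s p = some c}.Finite :=
    Set.Finite.subset (Set.finite_Iio s.length) hsub
  rw [colorPositions, dif_pos hfin]
  have hnodup : (cpos c s).Nodup :=
    List.Pairwise.imp ne_of_lt (cpos_sorted c s)
  refine (fun hp h1 h2 => List.Perm.eq_of_pairwise' (r := (· ≤ ·)) h1 h2 hp) ?_ ?_ ?_
  · refine (List.perm_ext_iff_of_nodup (Finset.sort_nodup _ _) hnodup).2 fun a => ?_
    rw [Finset.mem_sort, Set.Finite.mem_toFinset, cpos_mem]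
    rfl
  · exact Finset.pairwise_sort _ _
  · exact List.Pairwise.imp le_of_lt (cpos_sorted c s)

lemma cpos_lt_length {c : Fin m} {w : List (Option (Fin m))} {R p : ℕ}
    (hp : p ∈ cpos c (w ++ List.replicate R none)) : p < w.length := by
  rw [cpos_mem] at hp
  by_contra hlt
  have hlen : w.length ≤ p := by omega
  rw [List.getD_eq_getElem?_getD, List.getElem?_append, if_neg (by omega),
    List.getElem?_replicate] at hp
  by_cases h : p - w.length < R
  · rw [if_pos h] at hp
    simpa using hp
  · rw [if_neg h] at hp
    simpa using hp

lemma moveColor_toFun (c : Fin m) (w : List (Option (Fin m))) (R : ℕ)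
    (h : w.count (some c) ≤ R) :
    moveColor (toFun (w ++ List.replicate R none)) c
      = toFun (scanC c 0 (w ++ List.replicate R none)) := by
  have hcnt : (w ++ List.replicate R none).count (some c) = w.count (some c) := by
    rw [List.count_append, List.count_replicate]
    simp
  rw [moveColor, colorPositions_toFun]
  rw [foldl_moveBall_toFun (cpos c (w ++ List.replicate R none)) w R
    (fun p hp => cpos_lt_length hp) (by rw [cpos_length, hcnt]; omega)]
  have hFK := FK c w R 0 (by omega)
  rw [fill_zero] at hFK
  rw [hFK]

/-! ### The full time evolution equals the full carrier scan -/

lemma bbsT_toFun (w₀ : List (Option (Fin m))) (R₀ : ℕ)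
    (h₀ : 3 ^ m * (w₀.length + 1) ≤ R₀) :
    bbsT (toFun (w₀ ++ List.replicate R₀ none))
      = toFun (Sr m [] (w₀ ++ List.replicate R₀ none)) := by
  set s₀ := w₀ ++ List.replicate R₀ none with hs₀
  suffices h : ∀ j, j ≤ m → (List.foldl moveColor (toFun s₀) ((List.finRange m).take j)
      = toFun (Sr j [] s₀)) ∧ ∃ w R, Sr j [] s₀ = w ++ List.replicate R none ∧
        3 ^ (m - j) * (w.length + 1) ≤ R by
    have hm := (h m le_rfl).1
    rw [bbsT, ← List.take_length (l := List.finRange m), List.length_finRange]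
    exact hm
  intro j
  induction j with
  | zero =>
    intro _
    constructor
    · rw [List.take_zero, List.foldl_nil, Sr_zero]
    · exact ⟨w₀, R₀, by rw [Sr_zero], by simpa using h₀⟩
  | succ j ih =>
    intro hj1
    obtain ⟨ih1, w, R, hdec, hR⟩ := ih (by omega)
    have hjm : j < m := hj1
    have hwR : w.length + 1 ≤ R := by
      have h3 : 1 ≤ 3 ^ (m - j) := Nat.one_le_pow _ _ (by omega)
      nlinarith
    have htake : (List.finRange m).take (j + 1)
        = (List.finRange m).take j ++ [(⟨j, hjm⟩ : Fin m)] := by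
      rw [List.take_succ]
      congr 1
      rw [List.getElem?_eq_getElem (by rw [List.length_finRange]; omega)]
      rw [List.getElem_finRange]
      rfl
    rw [htake, List.foldl_append, List.foldl_cons, List.foldl_nil, ih1]
    have hcnt : w.count (some (⟨j, hjm⟩ : Fin m)) ≤ R := by
      have := List.count_le_length (a := some (⟨j, hjm⟩ : Fin m)) (l := w)
      omega
    have h1 : moveColor (toFun (Sr j [] s₀)) ⟨j, hjm⟩
        = toFun (scanC ⟨j, hjm⟩ 0 (Sr j [] s₀)) := by
      rw [hdec]
      exact moveColor_toFun _ w R hcnt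
    have h2 : scanC ⟨j, hjm⟩ 0 (Sr j [] s₀) = Sr (j + 1) [] s₀ := by
      have hcs := scanC_Sr (⟨j, hjm⟩ : Fin m) s₀ [] 0 (by simp) (by simp)
      simpa using hcs
    refine ⟨by rw [h1, h2], ?_⟩
    obtain ⟨w', k', hw1, hw2, hw3⟩ :=
      scanC_trailing (⟨j, hjm⟩ : Fin m) w R 0 (by omega)
    refine ⟨w', R - k', ?_, ?_⟩
    · rw [← h2, hdec, hw1]
    · have hkw : k' ≤ w.length := by
        have := List.count_le_length (a := some (⟨j, hjm⟩ : Fin m)) (l := w)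
        omega
      have hmj : m - j = (m - (j + 1)) + 1 := by omega
      set a := 3 ^ (m - (j + 1)) with ha
      have h3 : 3 ^ (m - j) = 3 * a := by rw [hmj, pow_succ, mul_comm]
      have ha1 : 1 ≤ a := Nat.one_le_pow _ _ (by omega)
      rw [h3] at hR
      have key : a * (w'.length + 1) + k' ≤ 3 * a * (w.length + 1) := by
        rw [hw2]
        nlinarith
      omega

/-! ### extract and the final assembly -/

lemma extract_toFun (l : List (Option (Fin m))) :
    extract (toFun l) = l.filterMap id := by
  classical
  have hex : ∃ N, ∀ i, N ≤ i → toFun l i = none :=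
    ⟨l.length, fun i hi => List.getD_eq_default _ _ hi⟩
  rw [extract, dif_pos hex]
  have hN₀ : ∀ i, Nat.find hex ≤ i → toFun l i = none := Nat.find_spec hex
  have hN₀le : Nat.find hex ≤ l.length :=
    Nat.find_min' hex (fun i hi => List.getD_eq_default _ _ hi)
  have h1 : (List.range (Nat.find hex)).map (toFun l) = l.take (Nat.find hex) := by
    apply List.ext_getElem?
    intro i
    rw [List.getElem?_map, List.getElem?_take]
    by_cases hi : i < Nat.find hex
    · rw [List.getElem?_range hi, if_pos hi]
      have hil : i < l.length := by omega
      rw [List.getElem?_eq_getElem hil]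
      show some (toFun l i) = _
      have : toFun l i = l[i] := by
        show l.getD i none = _
        rw [List.getD_eq_getElem?_getD, List.getElem?_eq_getElem hil]
        rfl
      rw [this]
    · rw [if_neg hi]
      have : (List.range (Nat.find hex))[i]? = none := by
        rw [List.getElem?_eq_none]
        rw [List.length_range]
        omega
      rw [this]
      rfl
  have h2 : l.filterMap id = (l.take (Nat.find hex)).filterMap id := by
    conv_lhs => rw [← List.take_append_drop (Nat.find hex) l]
    rw [List.filterMap_append]
    suffices hnil : (l.drop (Nat.find hex)).filterMap id = [] by
      rw [hnil, List.append_nil]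
    rw [List.filterMap_eq_nil_iff]
    intro a ha
    obtain ⟨i, hilen, hieq⟩ := List.mem_iff_getElem.1 ha
    have hlen2 : Nat.find hex + i < l.length := by
      rw [List.length_drop] at hilen
      omega
    have h3 : toFun l (Nat.find hex + i) = none := hN₀ _ (by omega)
    have h4 : l[Nat.find hex + i] = a := by
      rw [← hieq, List.getElem_drop]
    have h5 : toFun l (Nat.find hex + i) = l[Nat.find hex + i] := by
      show l.getD _ none = _
      rw [List.getD_eq_getElem?_getD, List.getElem?_eq_getElem hlen2]
      rfl
    rw [h5, h4] at h3
    rw [h3]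
    rfl
  have h0 : (List.range (Nat.find hex)).filterMap (toFun l)
      = ((List.range (Nat.find hex)).map (toFun l)).filterMap id := by
    rw [List.filterMap_map, Function.id_comp]
  rw [h0, h1, ← h2]

end BBS

/-- the P-symbol of the RSK correspondence is a conserved quantity of the
generalized box-ball system: `∅ ← f(u) = ∅ ← f(T(u))`. -/
theorem stmt_1 (m : ℕ) (hm : 1 ≤ m) (u : ℕ → Option (Fin m))
    (hu : ∃ N, ∀ i, N ≤ i → u i = none) :
    PSymbol (extract u) = PSymbol (extract (bbsT u)) := by
  classical
  obtain ⟨N, hN⟩ := hu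
  set R₀ := 3 ^ m * (N + 1) with hR₀
  set w₀ := (List.range N).map u with hw₀
  set s₀ := w₀ ++ List.replicate R₀ none with hs₀
  have hw₀len : w₀.length = N := by
    rw [hw₀, List.length_map, List.length_range]
  have hNR₀ : N ≤ R₀ := by
    have hp : 1 ≤ 3 ^ m := Nat.one_le_pow _ _ (by omega)
    have : N + 1 ≤ 3 ^ m * (N + 1) := Nat.le_mul_of_pos_left _ (by omega)
    omega
  have hu_eq : u = BBS.toFun s₀ := by
    funext i
    show u i = s₀.getD i none
    rw [List.getD_eq_getElem?_getD, hs₀, List.getElem?_append]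
    by_cases hi : i < w₀.length
    · rw [if_pos hi]
      have hiN : i < N := by rwa [hw₀len] at hi
      rw [hw₀, List.getElem?_map, List.getElem?_range hiN]
      rfl
    · rw [if_neg hi]
      have hiN : N ≤ i := by rw [hw₀len] at hi; omega
      rw [List.getElem?_replicate, hN i hiN]
      by_cases h2 : i - w₀.length < R₀
      · rw [if_pos h2]
        rfl
      · rw [if_neg h2]
        rfl
  have hbbs : bbsT u = BBS.toFun (BBS.Sr m [] s₀) := by
    rw [hu_eq]
    exact BBS.bbsT_toFun w₀ R₀ (by rw [hw₀len])
  have hfcr : BBS.fcr m [] s₀ = [] := by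
    rw [hs₀, BBS.fcr_append, BBS.fcr_replicate]
    apply List.drop_eq_nil_of_le
    have h1 := BBS.fcr_length_le m w₀ []
    have h2 := List.length_filterMap_le id w₀
    rw [hw₀len] at h2
    simp only [List.length_nil, Nat.zero_add] at h1
    omega
  calc PSymbol (extract u)
      = BBS.insWord [] (([] : List (Fin m)) ++ s₀.filterMap id) := by
        rw [hu_eq, BBS.extract_toFun]
        rfl
    _ = BBS.insWord [] ((BBS.Sr m [] s₀).filterMap id) :=
        BBS.telescope s₀ [] [] (by simp) (fun R hR => absurd hR List.not_mem_nil) hfcr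
    _ = PSymbol (extract (bbsT u)) := by
        rw [hbbs, BBS.extract_toFun]
        rfl
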